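/- arXiv:0706.4186 — 12 statements merged into one kernel-verified Lean document; each statement's English description precedes it below -/
import Mathlib

section
/- Let (X, τ₁, τ₂) be a bitopological space with subsets Y, Z ⊆ X such that X = Y ∪ Z and the sets Y \ Z and Z \ Y are p-separated (i.e. cl₁(Y\Z) ∩ (Z\Y) = ∅ and (Y\Z) ∩ cl₂(Z\Y) = ∅). Then for every subset A ⊆ X, the D-closure of A with respect to (Y,Z) equals (closure of A ∩ Y in the subspace topology τ₁ restricted to Y) ∪ (closure of A ∩ Z in the subspace topology τ₂ restricted to Z). -/
/-!
A subspace closure is the trace of the ambient closure, so the right-hand side is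
`(cl₁(A ∩ Y) ∩ Y) ∪ (cl₂(A ∩ Z) ∩ Z)`. The two remaining terms of the D-closure,
`cl₂(A ∩ (Z \ Y)) ∩ Y` and `cl₁(A ∩ (Y \ Z)) ∩ Z`, are absorbed: a point of `Y` adherent
to `Z \ Y` cannot lie in `Y \ Z` by p-separation, hence lies in `Z`, and symmetrically.
-/

open Set

/-- The closure of `A` inside the subspace `Y` (with the topology induced from `t`),
viewed as a subset of the ambient space. -/
def subClosure {X : Type*} (t : TopologicalSpace X) (Y A : Set X) : Set X :=
  Subtype.val '' (@closure _ (TopologicalSpace.induced (Subtype.val : Y → X) t)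
    ((Subtype.val : Y → X) ⁻¹' A))

lemma subClosure_eq {X : Type*} (t : TopologicalSpace X) (Y A : Set X) :
    subClosure t Y A = @closure X t (A ∩ Y) ∩ Y := by
  let := t
  ext x
  constructor
  · rintro ⟨y, hy, rfl⟩
    rw [closure_subtype, Subtype.image_preimage_coe, inter_comm] at hy
    exact ⟨hy, y.2⟩
  · rintro ⟨hx, hxY⟩
    refine ⟨⟨x, hxY⟩, ?_, rfl⟩
    rw [closure_subtype, Subtype.image_preimage_coe, inter_comm]
    exact hx

lemma closure_inter_diff_inter_subset {X : Type*} [TopologicalSpace X] {S T : Set X}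
    (hsep : closure (S \ T) ∩ (T \ S) = ∅) (A : Set X) :
    closure (A ∩ (S \ T)) ∩ T ⊆ closure (A ∩ S) ∩ S := by
  rintro x ⟨hx, hxT⟩
  have hxS : x ∈ S := by
    by_contra hxS
    have hx' : x ∈ closure (S \ T) := closure_mono inter_subset_right hx
    exact (eq_empty_iff_forall_notMem.mp hsep) x ⟨hx', hxT, hxS⟩
  exact ⟨closure_mono (inter_subset_inter_right A sdiff_subset) hx, hxS⟩

theorem stmt1_general {X : Type*} (t1 t2 : TopologicalSpace X) (Y Z : Set X)
    (hsep1 : @closure X t1 (Y \ Z) ∩ (Z \ Y) = ∅)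
    (hsep2 : (Y \ Z) ∩ @closure X t2 (Z \ Y) = ∅)
    (A : Set X) :
    ((@closure X t1 (A ∩ Y) ∪ @closure X t2 (A ∩ (Z \ Y))) ∩ Y) ∪
      ((@closure X t2 (A ∩ Z) ∪ @closure X t1 (A ∩ (Y \ Z))) ∩ Z) =
    subClosure t1 Y (A ∩ Y) ∪ subClosure t2 Z (A ∩ Z) := by
  have hZY := @closure_inter_diff_inter_subset X t2 Z Y (by rwa [inter_comm] at hsep2) A
  have hYZ := @closure_inter_diff_inter_subset X t1 Y Z hsep1 A
  rw [subClosure_eq, subClosure_eq, inter_assoc, inter_self, inter_assoc, inter_self,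
    union_inter_distrib_right, union_inter_distrib_right]
  exact Subset.antisymm
    (union_subset (union_subset subset_union_left (hZY.trans subset_union_right))
      (union_subset subset_union_right (hYZ.trans subset_union_left)))
    (union_subset_union subset_union_left subset_union_left)

theorem stmt1 {X : Type*} (t1 t2 : TopologicalSpace X) (Y Z : Set X)
    (hcover : Y ∪ Z = Set.univ)
    (hsep1 : @closure X t1 (Y \ Z) ∩ (Z \ Y) = ∅)
    (hsep2 : (Y \ Z) ∩ @closure X t2 (Z \ Y) = ∅)
    (A : Set X) :
    ((@closure X t1 (A ∩ Y) ∪ @closure X t2 (A ∩ (Z \ Y))) ∩ Y) ∪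
      ((@closure X t2 (A ∩ Z) ∪ @closure X t1 (A ∩ (Y \ Z))) ∩ Z) =
    subClosure t1 Y (A ∩ Y) ∪ subClosure t2 Z (A ∩ Z) :=
  stmt1_general t1 t2 Y Z hsep1 hsep2 A
end

section
/- Let (X, τ₁, τ₂) be a bitopological space with X = Y ∪ Z, where Y \ Z and Z \ Y are p-separated. Then for A ⊆ X, A equals its D-closure with respect to (Y,Z) if and only if A ∩ Y is closed in the subspace (Y, τ₁|Y) and A ∩ Z is closed in the subspace (Z, τ₂|Z). -/
lemma aux_isClosed_sub {X : Type*} (t : TopologicalSpace X) (S Y : Set X) (hS : S ⊆ Y) :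
    @IsClosed _ (TopologicalSpace.induced (Subtype.val : Y → X) t)
      ((Subtype.val : Y → X) ⁻¹' S) ↔ @closure X t S ∩ Y ⊆ S := by
  letI := t
  rw [isClosed_induced_iff]
  constructor
  · rintro ⟨C, hC, hCS⟩
    have hiff : ∀ y : Y, (y : X) ∈ C ↔ (y : X) ∈ S := fun y => by
      constructor
      · intro h; have : y ∈ (Subtype.val : Y → X) ⁻¹' C := h; rw [hCS] at this; exact this
      · intro h; have : y ∈ (Subtype.val : Y → X) ⁻¹' S := h; rw [← hCS] at this; exact this
    have hSC : S ⊆ C := fun s hs => (hiff ⟨s, hS hs⟩).2 hs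
    intro x ⟨hx, hxY⟩
    exact (hiff ⟨x, hxY⟩).1 (hC.closure_subset_iff.2 hSC hx)
  · intro h
    exact ⟨closure S, isClosed_closure, Set.ext fun y =>
      ⟨fun hy => h ⟨hy, y.2⟩, fun hy => subset_closure hy⟩⟩


lemma cl_mono' {X : Type*} (t : TopologicalSpace X) {s u : Set X} (h : s ⊆ u) :
    @closure X t s ⊆ @closure X t u := by
  letI := t; exact closure_mono h

lemma subset_cl' {X : Type*} (t : TopologicalSpace X) (s : Set X) :
    s ⊆ @closure X t s := by
  letI := t; exact subset_closure

theorem stmt2 {X : Type*} (t1 t2 : TopologicalSpace X) (Y Z : Set X)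
    (hcover : Y ∪ Z = Set.univ)
    (hsep1 : @closure X t1 (Y \ Z) ∩ (Z \ Y) = ∅)
    (hsep2 : (Y \ Z) ∩ @closure X t2 (Z \ Y) = ∅)
    (A : Set X) :
    A = ((@closure X t1 (A ∩ Y) ∪ @closure X t2 (A ∩ (Z \ Y))) ∩ Y) ∪
        ((@closure X t2 (A ∩ Z) ∪ @closure X t1 (A ∩ (Y \ Z))) ∩ Z) ↔
      @IsClosed _ (TopologicalSpace.induced (Subtype.val : Y → X) t1)
          ((Subtype.val : Y → X) ⁻¹' (A ∩ Y)) ∧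
      @IsClosed _ (TopologicalSpace.induced (Subtype.val : Z → X) t2)
          ((Subtype.val : Z → X) ⁻¹' (A ∩ Z)) := by
  rw [aux_isClosed_sub t1 (A ∩ Y) Y Set.inter_subset_right,
      aux_isClosed_sub t2 (A ∩ Z) Z Set.inter_subset_right]
  constructor
  · intro hA
    constructor
    · intro x ⟨hx, hxY⟩
      refine ⟨?_, hxY⟩
      rw [hA]
      exact Or.inl ⟨Or.inl hx, hxY⟩
    · intro x ⟨hx, hxZ⟩
      refine ⟨?_, hxZ⟩
      rw [hA]
      exact Or.inr ⟨Or.inl hx, hxZ⟩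
  · rintro ⟨h1, h2⟩
    apply Set.Subset.antisymm
    · intro x hx
      have hx' : x ∈ Y ∪ Z := hcover ▸ Set.mem_univ x
      rcases hx' with hY | hZ
      · exact Or.inl ⟨Or.inl (subset_cl' t1 _ ⟨hx, hY⟩), hY⟩
      · exact Or.inr ⟨Or.inl (subset_cl' t2 _ ⟨hx, hZ⟩), hZ⟩
    · rintro x (⟨h | h, hY⟩ | ⟨h | h, hZ⟩)
      · exact (h1 ⟨h, hY⟩).1
      · -- x ∈ cl2 (A ∩ (Z \ Y)), x ∈ Y
        have hxZ : x ∈ Z := by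
          by_contra hxZ
          have hmem : x ∈ (Y \ Z) ∩ @closure X t2 (Z \ Y) :=
            ⟨⟨hY, hxZ⟩, cl_mono' t2 (fun a ha => ha.2) h⟩
          rw [hsep2] at hmem
          exact hmem
        have : x ∈ @closure X t2 (A ∩ Z) :=
          cl_mono' t2 (show A ∩ (Z \ Y) ⊆ A ∩ Z from fun a ha => ⟨ha.1, ha.2.1⟩) h
        exact (h2 ⟨this, hxZ⟩).1
      · exact (h2 ⟨h, hZ⟩).1
      · have hxY : x ∈ Y := by
          by_contra hxY
          have hmem : x ∈ @closure X t1 (Y \ Z) ∩ (Z \ Y) :=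
            ⟨cl_mono' t1 (fun a ha => ha.2) h, ⟨hZ, hxY⟩⟩
          rw [hsep1] at hmem
          exact hmem
        have : x ∈ @closure X t1 (A ∩ Y) :=
          cl_mono' t1 (show A ∩ (Y \ Z) ⊆ A ∩ Y from fun a ha => ⟨ha.1, ha.2.1⟩) h
        exact (h1 ⟨this, hxY⟩).1
end

section
/- Let (Y, τ₁', τ₂') be a subspace of a bitopological space (X, τ₁, τ₂). If Y is τᵢ-closed in X and (Y, τ₁', τ₂') is p-strongly normal in X, then (Y, τ₁', τ₂') is (i,j)-WS-supernormal in X (where {i,j} = {1,2}). -/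
/-! Separate `A` from the trace `B ∩ Y`, which is closed in `(Y, τⱼ')`; then cut the `τⱼ`-open
set down to `Y` and enlarge the `τᵢ`-open one by the `τᵢ`-open set `Yᶜ`. -/

/-- `Y` is (i,j)-WS-supernormal in `X`: disjoint sets `A` closed in `(Y, τᵢ')` and
`B` closed in `(X, τⱼ)` are separated by disjoint `U` open in `(Y, τⱼ')` and
`V` open in `(X, τᵢ)`. -/
def WSSupernormalIn {X : Type*} (ti tj : TopologicalSpace X) (Y : Set X) : Prop :=
  ∀ A B : Set X, A ⊆ Y →
    @IsClosed _ (TopologicalSpace.induced (Subtype.val : Y → X) ti)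
      ((Subtype.val : Y → X) ⁻¹' A) →
    @IsClosed X tj B → A ∩ B = ∅ →
    ∃ U V : Set X, U ⊆ Y ∧
      @IsOpen _ (TopologicalSpace.induced (Subtype.val : Y → X) tj)
        ((Subtype.val : Y → X) ⁻¹' U) ∧
      @IsOpen X ti V ∧ A ⊆ U ∧ B ⊆ V ∧ U ∩ V = ∅

/-- `Y` is p-strongly normal in `X`: disjoint sets `A` closed in `(Y, τᵢ')` and
`B` closed in `(Y, τⱼ')` are separated by disjoint `U ∈ τⱼ` and `V ∈ τᵢ`. -/
def PStronglyNormalIn {X : Type*} (ti tj : TopologicalSpace X) (Y : Set X) : Prop :=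
  ∀ A B : Set X, A ⊆ Y → B ⊆ Y →
    @IsClosed _ (TopologicalSpace.induced (Subtype.val : Y → X) ti)
      ((Subtype.val : Y → X) ⁻¹' A) →
    @IsClosed _ (TopologicalSpace.induced (Subtype.val : Y → X) tj)
      ((Subtype.val : Y → X) ⁻¹' B) →
    A ∩ B = ∅ →
    ∃ U V : Set X, @IsOpen X tj U ∧ @IsOpen X ti V ∧ A ⊆ U ∧ B ⊆ V ∧ U ∩ V = ∅

open Set

theorem inter_inter_compl_union_eq_empty {X : Type*} {U V : Set X} (Y : Set X)
    (h : U ∩ V = ∅) : U ∩ Y ∩ (Yᶜ ∪ V) = ∅ := by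
  rw [← disjoint_iff_inter_eq_empty] at h ⊢
  exact disjoint_union_right.2
    ⟨(disjoint_compl_right (a := Y)).mono_left inter_subset_right,
      h.mono_left inter_subset_left⟩

theorem stmt5 {X : Type*} (ti tj : TopologicalSpace X) (Y : Set X)
    (hY : @IsClosed X ti Y) (h : PStronglyNormalIn ti tj Y) :
    WSSupernormalIn ti tj Y := by
  intro A B hAY hA hB hAB
  have hBY : @IsClosed _ (tj.induced (Subtype.val : Y → X)) (Subtype.val ⁻¹' (B ∩ Y)) := by
    rw [Subtype.preimage_coe_inter_self]
    exact isClosed_induced hB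
  have hABY : A ∩ (B ∩ Y) = ∅ := by rw [← inter_assoc, hAB, empty_inter]
  obtain ⟨U, V, hU, hV, hAU, hBV, hUV⟩ := h A (B ∩ Y) hAY inter_subset_right hA hBY hABY
  refine ⟨U ∩ Y, Yᶜ ∪ V, inter_subset_right, ?_,
    @IsOpen.union _ _ _ ti (@IsClosed.isOpen_compl _ ti _ hY) hV,
    subset_inter hAU hAY, (inter_subset _ _ _).1 hBV, inter_inter_compl_union_eq_empty Y hUV⟩
  rw [Subtype.preimage_coe_inter_self]
  exact isOpen_induced hU
end

section
/- Let (Y, τ₁', τ₂') be a subspace of a bitopological space (X, τ₁, τ₂). If Y is τⱼ-open in X and (Y, τ₁', τ₂') is (i,j)-WS-supernormal in X, then (Y, τ₁', τ₂') is p-strongly normal in X. -/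
/-!
Given `A` closed in `(Y, τᵢ')` and `B` closed in `(Y, τⱼ')`, separate `A` from the `τⱼ`-closure
of `B` in `X` using WS-supernormality; this closure still misses `A` because its trace on `Y`
is `B`. The `τⱼ'`-open set around `A` is contained in the `τⱼ`-open set `Y`, so it is
`τⱼ`-open in `X`.
-/

open Topology

section Subspace

variable {X : Type*} [TopologicalSpace X] {Y : Set X}

theorem inter_closure_subset_of_isClosed_preimage_val {B : Set X} (hBY : B ⊆ Y)
    (hB : IsClosed ((↑) ⁻¹' B : Set Y)) : Y ∩ closure B ⊆ B := by
  simpa only [Set.inter_eq_right.mpr hBY] using isClosed_preimage_val.mp hB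

theorem isOpen_of_isOpen_preimage_val (hY : IsOpen Y) {U : Set X} (hUY : U ⊆ Y)
    (hU : IsOpen ((↑) ⁻¹' U : Set Y)) : IsOpen U := by
  simpa only [Subtype.image_preimage_coe, Set.inter_eq_right.mpr hUY] using hU.trans hY

end Subspace

theorem stmt6 {X : Type*} (ti tj : TopologicalSpace X) (Y : Set X)
    (hY : @IsOpen X tj Y) (h : WSSupernormalIn ti tj Y) :
    PStronglyNormalIn ti tj Y := by
  intro A B hAY hBY hA hB hAB
  have hA_closure : A ∩ closure[tj] B = ∅ := by
    refine Set.eq_empty_iff_forall_notMem.mpr fun x ⟨hxA, hxB⟩ ↦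
      Set.eq_empty_iff_forall_notMem.mp hAB x ⟨hxA, ?_⟩
    exact (@inter_closure_subset_of_isClosed_preimage_val X tj Y B hBY hB) ⟨hAY hxA, hxB⟩
  obtain ⟨U, V, hUY, hU, hV, hAU, hBV, hUV⟩ :=
    h A (closure[tj] B) hAY hA (@isClosed_closure X tj B) hA_closure
  exact ⟨U, V, @isOpen_of_isOpen_preimage_val X tj Y hY U hUY hU, hV, hAU,
    (@subset_closure X tj B).trans hBV, hUV⟩
end

section
/- Every subspace of an (i,j)-submaximal bitopological space is (i,j)-submaximal. Moreover, if (X, τ₁, τ₂) is (i,j)-submaximal, Y ⊆ X is τⱼ-discrete (every point of Y is τⱼ-isolated in Y), and Y contains no point that is τⱼ-isolated in X, then Y is τᵢ-closed. -/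
theorem stmt9 {X : Type*} (ti tj : TopologicalSpace X)
    (hsub : ∀ A : Set X, ∃ U F : Set X, @IsOpen X ti U ∧ @IsClosed X tj F ∧ A = U ∩ F) :
    -- every subspace is (i,j)-submaximal
    (∀ Y : Set X, ∀ A : Set Y, ∃ U F : Set Y,
        @IsOpen _ (TopologicalSpace.induced (Subtype.val : Y → X) ti) U ∧
        @IsClosed _ (TopologicalSpace.induced (Subtype.val : Y → X) tj) F ∧ A = U ∩ F) ∧
    -- a τⱼ-discrete set containing no τⱼ-isolated point of X is τᵢ-closed
    (∀ Y : Set X, (∀ y ∈ Y, ∃ V : Set X, @IsOpen X tj V ∧ V ∩ Y = {y}) →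
      (∀ y ∈ Y, ¬ @IsOpen X tj ({y} : Set X)) → @IsClosed X ti Y) := by
  constructor
  · intro Y A
    obtain ⟨U, F, hU, hF, hUF⟩ := hsub (Subtype.val '' A)
    refine ⟨Subtype.val ⁻¹' U, Subtype.val ⁻¹' F, ⟨U, hU, rfl⟩, ?_, ?_⟩
    · rw [isClosed_induced_iff]
      exact ⟨F, hF, rfl⟩
    · have h : Subtype.val ⁻¹' (Subtype.val '' A) = A :=
        Set.preimage_image_eq A Subtype.val_injective
      rw [← h, hUF, Set.preimage_inter]
  · intro Y hdisc hniso
    obtain ⟨U, F, hU, hF, hUF⟩ := hsub Yᶜ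
    have hFc : Fᶜ = ∅ := by
      by_contra h
      obtain ⟨y, hy⟩ := Set.nonempty_iff_ne_empty.mpr h
      have hyY : y ∈ Y := by
        by_contra hyY
        have h2 : y ∈ U ∩ F := by rw [← hUF]; exact hyY
        exact hy h2.2
      obtain ⟨V, hV, hVY⟩ := hdisc y hyY
      have hopen : @IsOpen X tj (V ∩ Fᶜ) := hV.inter hF.isOpen_compl
      have heq : V ∩ Fᶜ = {y} := by
        apply Set.Subset.antisymm
        · intro z hz
          have hzY : z ∈ Y := by
            by_contra hzY
            have h2 : z ∈ U ∩ F := by rw [← hUF]; exact hzY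
            exact hz.2 h2.2
          have : z ∈ V ∩ Y := ⟨hz.1, hzY⟩
          rw [hVY] at this
          exact this
        · rintro z rfl
          exact ⟨(hVY.ge rfl).1, hy⟩
      exact hniso y hyY (heq ▸ hopen)
    have hFuniv : F = Set.univ := by rw [← Set.compl_empty, ← hFc, compl_compl]
    have hYc : Yᶜ = U := by rw [hUF, hFuniv, Set.inter_univ]
    rw [← @isOpen_compl_iff X Y ti, hYc]
    exact hU
end

section
/- Let (X, τ₁, τ₂) be a bitopological space with τ₁ ⊆ τ₂. If (X, τ₁, τ₂) is 1-submaximal (every subset is locally closed with respect to τ₁), then every set A that is (i,j)-nowhere dense for some i ≠ j, or τᵢ-nowhere dense for some i, satisfies A = cl₁(A) = cl₂(A) and A is discrete in both topologies. In particular X is nodec in both topologies and (i,j)-nodec for both orderings. -/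
/-!
Each of the four nowhere-density hypotheses forces `int₁ A = ∅`, since `int₁ ⊆ int₂` and
`A ⊆ clⱼ A`. In a `τ₁`-submaximal space every dense set is open, so the dense sets `Aᶜ` and
`Aᶜ ∪ {x}` are `τ₁`-open: `A` is `τ₁`-closed and `τ₁`-discrete, and both properties pass to the
finer topology `τ₂`.
-/

open Set Topology

section Submaximal

variable {X : Type*} [TopologicalSpace X]

theorem Dense.isOpen_of_isLocallyClosed {s : Set X} (hs : Dense s) (h : IsLocallyClosed s) :
    IsOpen s := by
  rwa [isLocallyClosed_iff_isOpen_coborder, coborder, hs.closure_eq, ← compl_eq_univ_sdiff,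
    compl_compl] at h

variable (hX : ∀ s : Set X, IsLocallyClosed s) {s : Set X} (hs : interior s = ∅)
include hX hs

theorem isClosed_of_interior_eq_empty : IsClosed s :=
  isOpen_compl_iff.mp <|
    (interior_eq_empty_iff_dense_compl.mp hs).isOpen_of_isLocallyClosed (hX _)

theorem exists_isOpen_inter_eq_singleton_of_interior_eq_empty :
    ∀ x ∈ s, ∃ U, IsOpen U ∧ U ∩ s = {x} := by
  intro x hx
  refine ⟨sᶜ ∪ {x}, ((interior_eq_empty_iff_dense_compl.mp hs).mono
    subset_union_left).isOpen_of_isLocallyClosed (hX _), ?_⟩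
  rw [union_inter_distrib_right, compl_inter_self, empty_union,
    inter_eq_left.mpr (singleton_subset_iff.mpr hx)]

end Submaximal

theorem interior_subset_interior_closure_of_le {X : Type*} {t₁ t₂ t₃ : TopologicalSpace X} (h : t₂ ≤ t₁)
    (s : Set X) : @interior X t₁ s ⊆ @interior X t₂ (@closure X t₃ s) :=
  @interior_maximal X t₂ _ _ ((@interior_subset X t₁ s).trans (@subset_closure X t₃ s))
    ((@isOpen_interior X t₁ s).mono h)

theorem stmt10 {X : Type*} (t1 t2 : TopologicalSpace X)
    (hle : ∀ U : Set X, @IsOpen X t1 U → @IsOpen X t2 U)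
    (hsub : ∀ A : Set X, ∃ U F : Set X, @IsOpen X t1 U ∧ @IsClosed X t1 F ∧ A = U ∩ F)
    (A : Set X)
    (hA : @interior X t1 (@closure X t2 A) = ∅ ∨ @interior X t2 (@closure X t1 A) = ∅ ∨
          @interior X t1 (@closure X t1 A) = ∅ ∨ @interior X t2 (@closure X t2 A) = ∅) :
    A = @closure X t1 A ∧ A = @closure X t2 A ∧
      (∀ x ∈ A, ∃ U : Set X, @IsOpen X t1 U ∧ U ∩ A = {x}) ∧
      (∀ x ∈ A, ∃ U : Set X, @IsOpen X t2 U ∧ U ∩ A = {x}) := by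
  have hle' : t2 ≤ t1 := hle
  have hint : @interior X t1 A = ∅ := by
    rcases hA with h | h | h | h
    · exact subset_eq_empty (interior_subset_interior_closure_of_le le_rfl A) h
    · exact subset_eq_empty (interior_subset_interior_closure_of_le hle' A) h
    · exact subset_eq_empty (interior_subset_interior_closure_of_le le_rfl A) h
    · exact subset_eq_empty (interior_subset_interior_closure_of_le hle' A) h
  have hclosed : IsClosed[t1] A := @isClosed_of_interior_eq_empty X t1 hsub A hint
  have hdiscrete := @exists_isOpen_inter_eq_singleton_of_interior_eq_empty X t1 hsub A hint
  refine ⟨(@IsClosed.closure_eq X t1 A hclosed).symm,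
    (@IsClosed.closure_eq X t2 A (hclosed.mono hle')).symm, hdiscrete, fun x hx => ?_⟩
  exact (hdiscrete x hx).imp fun U hU => ⟨hle U hU.1, hU.2⟩
end

section
/- Let (X, τ₁, τ₂) be a bitopological space with τ₂ T₁. Then (X, τ₁, τ₂) is an (i,j)-I-space (i.e., the τⱼ-derived set of X is τⱼ-closed and τᵢ-discrete) if and only if for every subset A ⊆ X, every point of the τⱼ-derived set of A is τᵢ-isolated in the τⱼ-derived set of A. -/
/-- The derived set of `A` with respect to the topology `t`. -/
def derivSet {X : Type*} (t : TopologicalSpace X) (A : Set X) : Set X :=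
  {x | ∀ U : Set X, @IsOpen X t U → x ∈ U → ∃ y ∈ U ∩ A, y ≠ x}

theorem derivSet_subset_univ' {X : Type*} (t : TopologicalSpace X) (A : Set X) :
    derivSet t A ⊆ derivSet t Set.univ := by
  intro x hx U hU hxU
  obtain ⟨y, hy, hyx⟩ := hx U hU hxU
  exact ⟨y, ⟨hy.1, trivial⟩, hyx⟩

theorem derivSet_isClosed' {X : Type*} (t : TopologicalSpace X) (h1 : @T1Space X t)
    (A : Set X) : @IsClosed X t (derivSet t A) := by
  letI := t
  haveI := h1
  rw [← isOpen_compl_iff, isOpen_iff_forall_mem_open]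
  intro x hx
  simp only [Set.mem_compl_iff, derivSet, Set.mem_setOf_eq] at hx
  push_neg at hx
  obtain ⟨U, hUo, hxU, hU⟩ := hx
  refine ⟨U, ?_, hUo, hxU⟩
  intro y hyU
  by_cases hyx : y = x
  · subst hyx
    simp only [Set.mem_compl_iff, derivSet, Set.mem_setOf_eq]
    push_neg
    exact ⟨U, hUo, hyU, hU⟩
  · intro hy
    obtain ⟨z, hz, hzy⟩ := hy (U ∩ {x}ᶜ) (hUo.inter isClosed_singleton.isOpen_compl)
      ⟨hyU, hyx⟩
    exact hz.1.2 (hU z ⟨hz.1.1, hz.2⟩)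

theorem stmt11 {X : Type*} (ti tj : TopologicalSpace X) (hT1 : @T1Space X tj) :
    (@IsClosed X tj (derivSet tj (Set.univ : Set X)) ∧
      ∀ x ∈ derivSet tj (Set.univ : Set X),
        ∃ U : Set X, @IsOpen X ti U ∧ U ∩ derivSet tj (Set.univ : Set X) = {x}) ↔
    (∀ A : Set X, ∀ x ∈ derivSet tj A,
      ∃ U : Set X, @IsOpen X ti U ∧ U ∩ derivSet tj A = {x}) := by
  constructor
  · rintro ⟨-, hdisc⟩ A x hx
    obtain ⟨U, hUo, hU⟩ := hdisc x (derivSet_subset_univ' tj A hx)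
    refine ⟨U, hUo, Set.Subset.antisymm ?_ ?_⟩
    · intro y hy
      have : y ∈ U ∩ derivSet tj Set.univ := ⟨hy.1, derivSet_subset_univ' tj A hy.2⟩
      rw [hU] at this
      exact this
    · intro y hy
      rw [Set.mem_singleton_iff] at hy
      subst hy
      have hxU : y ∈ U ∩ derivSet tj Set.univ := hU.symm ▸ rfl
      exact ⟨hxU.1, hx⟩
  · intro h
    exact ⟨derivSet_isClosed' tj hT1 Set.univ, h Set.univ⟩
end

section
/- If a bitopological space (X, τ₁, τ₂) is (i,j)-nodec and the set of τⱼ-isolated points of X is τᵢ-dense in X, then (X, τ₁, τ₂) is an (i,j)-I-space. -/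
/-!
The τⱼ-isolated points form a τⱼ-open set, so the τⱼ-derived set `D` is τⱼ-closed, i.e.
`clⱼ D = D`. As `D` is the complement of a τᵢ-dense set, `intᵢ D = ∅`; hence `D` is
(i,j)-nowhere dense, and the nodec property says exactly that `D` is τⱼ-closed and τᵢ-discrete.
-/

theorem isOpen_setOf_isOpen_singleton {X : Type*} [TopologicalSpace X] :
    IsOpen {x : X | IsOpen ({x} : Set X)} :=
  isOpen_iff_forall_mem_open.mpr fun x hx =>
    ⟨{x}, Set.singleton_subset_iff.mpr hx, hx, Set.mem_singleton x⟩

theorem isClosed_setOf_not_isOpen_singleton {X : Type*} [TopologicalSpace X] :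
    IsClosed {x : X | ¬ IsOpen ({x} : Set X)} :=
  isOpen_setOf_isOpen_singleton.isClosed_compl

theorem stmt12 {X : Type*} (ti tj : TopologicalSpace X)
    (hnodec : ∀ A : Set X, @interior X ti (@closure X tj A) = ∅ →
      @IsClosed X tj A ∧ ∀ x ∈ A, ∃ U : Set X, @IsOpen X ti U ∧ U ∩ A = {x})
    (hdense : @closure X ti {x : X | @IsOpen X tj ({x} : Set X)} = Set.univ) :
    @IsClosed X tj {x : X | ¬ @IsOpen X tj ({x} : Set X)} ∧
      ∀ x ∈ {x : X | ¬ @IsOpen X tj ({x} : Set X)},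
        ∃ U : Set X, @IsOpen X ti U ∧ U ∩ {x : X | ¬ @IsOpen X tj ({x} : Set X)} = {x} := by
  apply hnodec
  rw [(@isClosed_setOf_not_isOpen_singleton X tj).closure_eq]
  exact @Dense.interior_compl X ti _ ((@dense_iff_closure_eq X ti _).mpr hdense)
end

section
/- Let (X, τ₁, τ₂) be a bitopological space with τ₁ ⊆ τ₂ and τ₁ T₁. If X is a (2,1)-I-space, then X is (2,1)-submaximal: for every subset A ⊆ X, the set cl₁(A) \ A is τ₂-closed. -/
/-- The derived set of `A` with respect to the topology `t`. -/
private lemma mem_closure_aux {X : Type*} [TopologicalSpace X] {A : Set X} {y : X}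
    (hy : y ∈ closure A) : ∀ U : Set X, IsOpen U → y ∈ U → (U ∩ A).Nonempty :=
  mem_closure_iff.mp hy

private lemma isClosed_closure_aux {X : Type*} [TopologicalSpace X] (A : Set X) :
    IsClosed (closure A) := isClosed_closure

theorem stmt13 {X : Type*} (t1 t2 : TopologicalSpace X)
    (hle : ∀ U : Set X, @IsOpen X t1 U → @IsOpen X t2 U)
    (hT1 : @T1Space X t1)
    (hIclosed : derivSet t1 (Set.univ : Set X) =
      @closure X t1 (derivSet t1 (Set.univ : Set X)))
    (hIdisc : ∀ x ∈ derivSet t1 (Set.univ : Set X),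
      ∃ U : Set X, @IsOpen X t2 U ∧ U ∩ derivSet t1 (Set.univ : Set X) = {x})
    (A : Set X) :
    @IsClosed X t2 (@closure X t1 A \ A) := by
  letI := t2
  rw [← isOpen_compl_iff, isOpen_iff_forall_mem_open]
  intro x hx
  set D := derivSet t1 (Set.univ : Set X) with hD
  have hSD : @closure X t1 A \ A ⊆ D := by
    intro y hy U hU hyU
    obtain ⟨z, hzU, hzA⟩ := @mem_closure_aux X t1 A y hy.1 U hU hyU
    exact ⟨z, ⟨hzU, trivial⟩, fun h => hy.2 (h ▸ hzA)⟩
  by_cases hcA : x ∈ @closure X t1 A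
  · by_cases hxD : x ∈ D
    · obtain ⟨U, hU, hUD⟩ := hIdisc x hxD
      refine ⟨U, fun y hyU hyS => ?_, hU, ?_⟩
      · have hy : y ∈ U ∩ D := ⟨hyU, hSD hyS⟩
        rw [hUD] at hy
        exact hx (hy ▸ hyS)
      · have : x ∈ U ∩ D := by rw [hUD]; rfl
        exact this.1
    · have hxD' : ¬ ∀ U : Set X, @IsOpen X t1 U → x ∈ U →
        ∃ y ∈ U ∩ (Set.univ : Set X), y ≠ x := hxD
      push_neg at hxD'
      obtain ⟨U, hU, hxU, hU2⟩ := hxD'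
      have hxA : x ∈ A := by
        by_contra h; exact hx ⟨hcA, h⟩
      refine ⟨U, fun y hyU hyS => ?_, hle U hU, hxU⟩
      have : y = x := hU2 y ⟨hyU, trivial⟩
      exact hyS.2 (this ▸ hxA)
  · refine ⟨(@closure X t1 A)ᶜ, fun y hy hyS => hy hyS.1,
      hle _ (@IsClosed.isOpen_compl X t1 (@closure X t1 A) (@isClosed_closure_aux X t1 A)), hcA⟩
end

section
/- Let f : (X, τ₁, τ₂) → (Y, γ₁, γ₂) be a surjection that is open with respect to both pairs of topologies (f is 1-open and 2-open), or closed with respect to both. Then f is (i,j)-lcq: for every A ⊆ Y, if f⁻¹(A) is (i,j)-locally closed in X then A is (i,j)-locally closed in Y. Consequently, if X is (i,j)-submaximal then Y is (i,j)-submaximal. -/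
private lemma aux_isClosed_closure {Z : Type*} [TopologicalSpace Z] (A : Set Z) :
    IsClosed (closure A) := isClosed_closure

private lemma aux_subset_closure {Z : Type*} [TopologicalSpace Z] (A : Set Z) :
    A ⊆ closure A := subset_closure

private lemma aux_closure_subset {Z : Type*} [TopologicalSpace Z] {A F : Set Z}
    (hF : IsClosed F) (h : A ⊆ F) : closure A ⊆ F := hF.closure_subset_iff.mpr h

private lemma aux_preimage_closure {X Y : Type*} [TopologicalSpace X] [TopologicalSpace Y]
    {f : X → Y} (hf : IsOpenMap f) (B : Set Y) :
    f ⁻¹' (closure B) ⊆ closure (f ⁻¹' B) := by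
  intro x hx
  rw [mem_closure_iff]
  intro W hW hxW
  rw [Set.mem_preimage, mem_closure_iff] at hx
  obtain ⟨a, haW, haB⟩ := hx (f '' W) (hf W hW) ⟨x, hxW, rfl⟩
  obtain ⟨w, hwW, hwa⟩ := haW
  exact ⟨w, hwW, by simp [Set.mem_preimage, hwa, haB]⟩

private lemma aux_compl_open {Z : Type*} [TopologicalSpace Z] {A : Set Z}
    (h : IsClosed A) : IsOpen Aᶜ := h.isOpen_compl

private lemma aux_compl_closed {Z : Type*} [TopologicalSpace Z] {A : Set Z}
    (h : IsOpen A) : IsClosed Aᶜ := h.isClosed_compl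

theorem stmt14 {X Y : Type*} (ti tj : TopologicalSpace X) (si sj : TopologicalSpace Y)
    (f : X → Y) (hsurj : Function.Surjective f)
    (hmap : (@IsOpenMap X Y ti si f ∧ @IsOpenMap X Y tj sj f) ∨
            (@IsClosedMap X Y ti si f ∧ @IsClosedMap X Y tj sj f)) :
    -- f is (i,j)-lcq
    (∀ A : Set Y,
      (∃ U F : Set X, @IsOpen X ti U ∧ @IsClosed X tj F ∧ f ⁻¹' A = U ∩ F) →
      ∃ U F : Set Y, @IsOpen Y si U ∧ @IsClosed Y sj F ∧ A = U ∩ F) ∧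
    -- consequently (i,j)-submaximality is preserved
    ((∀ A : Set X, ∃ U F : Set X, @IsOpen X ti U ∧ @IsClosed X tj F ∧ A = U ∩ F) →
      ∀ A : Set Y, ∃ U F : Set Y, @IsOpen Y si U ∧ @IsClosed Y sj F ∧ A = U ∩ F) := by
  have main : ∀ A : Set Y,
      (∃ U F : Set X, @IsOpen X ti U ∧ @IsClosed X tj F ∧ f ⁻¹' A = U ∩ F) →
      ∃ U F : Set Y, @IsOpen Y si U ∧ @IsClosed Y sj F ∧ A = U ∩ F := by
    rintro A ⟨U, F, hU, hF, hpre⟩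
    rcases hmap with ⟨ho1, ho2⟩ | ⟨hc1, hc2⟩
    · refine ⟨f '' U, @closure Y sj A, ho1 U hU, @aux_isClosed_closure Y sj A, ?_⟩
      apply Set.Subset.antisymm
      · intro a ha
        obtain ⟨x, hx⟩ := hsurj a
        have hxA : x ∈ f ⁻¹' A := by simp [hx, ha]
        rw [hpre] at hxA
        exact ⟨⟨x, hxA.1, hx⟩, (@aux_subset_closure Y sj A) ha⟩
      · intro y hy
        obtain ⟨⟨x, hxU, rfl⟩, hcl⟩ := hy
        have hxpc : x ∈ f ⁻¹' (@closure Y sj A) := hcl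
        have hxcl : x ∈ @closure X tj (f ⁻¹' A) :=
          (@aux_preimage_closure X Y tj sj f ho2 A) hxpc
        have hxF : x ∈ F := by
          refine (@aux_closure_subset X tj (f ⁻¹' A) F hF ?_) hxcl
          rw [hpre]; exact Set.inter_subset_right
        have : x ∈ f ⁻¹' A := by rw [hpre]; exact ⟨hxU, hxF⟩
        exact this
    · refine ⟨(f '' Uᶜ)ᶜ, @closure Y sj A,
        @aux_compl_open Y si _ (hc1 Uᶜ (@aux_compl_closed X ti U hU)),
        @aux_isClosed_closure Y sj A, ?_⟩
      apply Set.Subset.antisymm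
      · intro a ha
        refine ⟨?_, (@aux_subset_closure Y sj A) ha⟩
        rintro ⟨z, hzU, hza⟩
        have : z ∈ f ⁻¹' A := by simp [Set.mem_preimage, hza, ha]
        rw [hpre] at this
        exact hzU this.1
      · intro y hy
        obtain ⟨hyV, hycl⟩ := hy
        have hAsub : A ⊆ f '' F := by
          intro a ha
          obtain ⟨x, hx⟩ := hsurj a
          have hxA : x ∈ f ⁻¹' A := by simp [hx, ha]
          rw [hpre] at hxA
          exact ⟨x, hxA.2, hx⟩
        have hclsub : @closure Y sj A ⊆ f '' F :=
          @aux_closure_subset Y sj A (f '' F) (hc2 F hF) hAsub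
        obtain ⟨x, hxF, hxy⟩ := hclsub hycl
        have hxU : x ∈ U := by
          by_contra hxU
          exact hyV ⟨x, hxU, hxy⟩
        have : x ∈ f ⁻¹' A := by rw [hpre]; exact ⟨hxU, hxF⟩
        rw [← hxy]
        exact this
  exact ⟨main, fun hsub A => main A (hsub (f ⁻¹' A))⟩
end

section
/- Let (X, τ₁, τ₂) with τ₁ ⊆ τ₂ be a (2,1)-I-space, and let f : (X, τ₁, τ₂) → (Y, γ₁, γ₂) with γ₁ ⊆ γ₂ be a surjection that is closed with respect to both topologies (or open with respect to both). Then (Y, γ₁, γ₂) is also a (2,1)-I-space. -/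
lemma notmem_derivSet_iff {X : Type*} (t : TopologicalSpace X) (x : X) :
    x ∉ derivSet t (Set.univ : Set X) ↔ @IsOpen X t {x} := by
  constructor
  · intro h
    simp only [derivSet, Set.mem_setOf_eq, not_forall] at h
    push_neg at h
    obtain ⟨U, hU, hxU, h2⟩ := h
    have : U = {x} := by
      ext z
      simp only [Set.mem_singleton_iff]
      constructor
      · intro hz; exact h2 z ⟨hz, trivial⟩
      · rintro rfl; exact hxU
    rwa [this] at hU
  · intro h hx
    obtain ⟨y, ⟨hyU, _⟩, hyx⟩ := hx {x} h rfl
    exact hyx hyU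

lemma closed_of_isolated_compl {X : Type*} (t : TopologicalSpace X) (D : Set X)
    (h : ∀ x ∉ D, @IsOpen X t {x}) : @IsClosed X t D := by
  letI := t
  rw [← isOpen_compl_iff]
  have hEq : Dᶜ = ⋃ x ∈ Dᶜ, ({x} : Set X) := by
    ext z
    simp only [Set.mem_iUnion, Set.mem_singleton_iff, Set.mem_compl_iff]
    exact ⟨fun hz => ⟨z, hz, rfl⟩, fun ⟨x, hx, hzx⟩ => hzx ▸ hx⟩
  rw [hEq]
  exact isOpen_biUnion h

lemma derivSet_closed_aux {X : Type*} (t : TopologicalSpace X) :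
    @IsClosed X t (derivSet t (Set.univ : Set X)) :=
  closed_of_isolated_compl t _ fun x hx => (notmem_derivSet_iff t x).mp hx

lemma subset_closed_aux {X : Type*} (t : TopologicalSpace X) (D S : Set X)
    (hS : S ⊆ D) (hDc : @IsClosed X t D)
    (hdisc : ∀ x ∈ D, ∃ U, @IsOpen X t U ∧ x ∈ U ∧ U ∩ D ⊆ {x}) :
    @IsClosed X t S := by
  letI := t
  rw [← isOpen_compl_iff]
  rw [isOpen_iff_forall_mem_open]
  intro z hz
  by_cases hzD : z ∈ D
  · obtain ⟨U, hU, hzU, hUD⟩ := hdisc z hzD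
    refine ⟨U, ?_, hU, hzU⟩
    intro w hw
    intro hwS
    have : w ∈ U ∩ D := ⟨hw, hS hwS⟩
    have hwz : w = z := hUD this
    exact hz (hwz ▸ hwS)
  · exact ⟨Dᶜ, fun w hw hwS => hw (hS hwS), hDc.isOpen_compl, hzD⟩

theorem stmt15 {X Y : Type*} (t1 t2 : TopologicalSpace X) (s1 s2 : TopologicalSpace Y)
    (hX : ∀ U : Set X, @IsOpen X t1 U → @IsOpen X t2 U)
    (hY : ∀ V : Set Y, @IsOpen Y s1 V → @IsOpen Y s2 V)
    (f : X → Y) (hsurj : Function.Surjective f)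
    (hmap : (@IsClosedMap X Y t1 s1 f ∧ @IsClosedMap X Y t2 s2 f) ∨
            (@IsOpenMap X Y t1 s1 f ∧ @IsOpenMap X Y t2 s2 f))
    (hIclosed : @IsClosed X t1 (derivSet t1 (Set.univ : Set X)))
    (hIdisc : ∀ x ∈ derivSet t1 (Set.univ : Set X),
      ∃ U : Set X, @IsOpen X t2 U ∧ U ∩ derivSet t1 (Set.univ : Set X) = {x}) :
    @IsClosed Y s1 (derivSet s1 (Set.univ : Set Y)) ∧
      ∀ y ∈ derivSet s1 (Set.univ : Set Y),
        ∃ V : Set Y, @IsOpen Y s2 V ∧ V ∩ derivSet s1 (Set.univ : Set Y) = {y} := by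
  set D := derivSet t1 (Set.univ : Set X) with hD
  set E := derivSet s1 (Set.univ : Set Y) with hE
  refine ⟨derivSet_closed_aux s1, ?_⟩
  -- key: every point of E has a preimage in D
  have key : ∀ y ∈ E, ∃ x, f x = y ∧ x ∈ D := by
    intro y hy
    by_contra h
    push_neg at h
    have hfib : ∀ x, f x = y → @IsOpen X t1 {x} := fun x hx =>
      (notmem_derivSet_iff t1 x).mp (h x hx)
    have hyiso : @IsOpen Y s1 {y} := by
      rcases hmap with ⟨hc1, _⟩ | ⟨ho1, _⟩
      · -- closed case
        have hopen : @IsOpen X t1 (f ⁻¹' {y}) := by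
          have hEq : f ⁻¹' {y} = ⋃ x ∈ f ⁻¹' {y}, ({x} : Set X) := by
            ext z
            simp only [Set.mem_iUnion, Set.mem_singleton_iff, Set.mem_preimage]
            exact ⟨fun hz => ⟨z, hz, rfl⟩, fun ⟨x, hx, hzx⟩ => hzx ▸ hx⟩
          rw [hEq]
          exact @isOpen_biUnion X X t1 _ _ fun x hx => hfib x hx
        have hclosedim : @IsClosed Y s1 (f '' (f ⁻¹' {y})ᶜ) :=
          hc1 _ (@IsOpen.isClosed_compl X t1 _ hopen)
        have heq : ({y} : Set Y) = (f '' (f ⁻¹' {y})ᶜ)ᶜ := by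
          ext z
          constructor
          · rintro rfl ⟨x, hx, hfx⟩
            exact hx (Set.mem_singleton_iff.mpr hfx)
          · intro hz
            obtain ⟨x, rfl⟩ := hsurj z
            by_contra hne
            exact hz ⟨x, fun hx => hne (Set.mem_singleton_iff.mp hx), rfl⟩
        rw [heq]
        exact hclosedim.isOpen_compl
      · -- open case
        obtain ⟨x, rfl⟩ := hsurj y
        have := ho1 _ (hfib x rfl)
        rwa [Set.image_singleton] at this
    exact absurd hy ((notmem_derivSet_iff s1 y).mpr hyiso)
  intro y hy
  obtain ⟨x, rfl, hxD⟩ := key y hy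
  obtain ⟨U, hUopen, hUD⟩ := hIdisc x hxD
  have hxU : x ∈ U := by
    have : x ∈ U ∩ D := by rw [hUD]; rfl
    exact this.1
  rcases hmap with ⟨_, hc2⟩ | ⟨ho1, ho2⟩
  · -- closed case
    have hDc2 : @IsClosed X t2 D :=
      closed_of_isolated_compl t2 D fun z hz => hX _ ((notmem_derivSet_iff t1 z).mp hz)
    have hdisc2 : ∀ z ∈ D, ∃ U, @IsOpen X t2 U ∧ z ∈ U ∧ U ∩ D ⊆ {z} := by
      intro z hz
      obtain ⟨U', hU', hU'D⟩ := hIdisc z hz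
      have hzU' : z ∈ U' := by
        have : z ∈ U' ∩ D := by rw [hU'D]; rfl
        exact this.1
      exact ⟨U', hU', hzU', hU'D.le⟩
    have hA : @IsClosed X t2 (D \ f ⁻¹' {f x}) :=
      subset_closed_aux t2 D _ Set.diff_subset hDc2 hdisc2
    have hfA : @IsClosed Y s2 (f '' (D \ f ⁻¹' {f x})) := hc2 _ hA
    refine ⟨(f '' (D \ f ⁻¹' {f x}))ᶜ, hfA.isOpen_compl, ?_⟩
    ext z
    simp only [Set.mem_inter_iff, Set.mem_compl_iff, Set.mem_singleton_iff]
    constructor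
    · rintro ⟨hz1, hz2⟩
      by_contra hne
      obtain ⟨x', hfx', hx'D⟩ := key z hz2
      refine hz1 ⟨x', ⟨hx'D, ?_⟩, hfx'⟩
      simp only [Set.mem_preimage, Set.mem_singleton_iff]
      rw [hfx']
      exact hne
    · rintro rfl
      refine ⟨?_, hy⟩
      rintro ⟨x', ⟨_, hx'⟩, hfx'⟩
      exact hx' (by simp [hfx'])
  · -- open case
    refine ⟨f '' U, ho2 _ hUopen, ?_⟩
    ext z
    simp only [Set.mem_inter_iff, Set.mem_image, Set.mem_singleton_iff]
    constructor
    · rintro ⟨⟨x', hx'U, hfx'⟩, hzE⟩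
      have hx'D : x' ∈ D := by
        by_contra hx'
        have h1 : @IsOpen X t1 {x'} := (notmem_derivSet_iff t1 x').mp hx'
        have h2 : @IsOpen Y s1 {f x'} := by
          have := ho1 _ h1
          rwa [Set.image_singleton] at this
        rw [hfx'] at h2
        exact absurd hzE ((notmem_derivSet_iff s1 z).mpr h2)
      have : x' ∈ U ∩ D := ⟨hx'U, hx'D⟩
      rw [hUD] at this
      rw [← hfx', this]
    · rintro rfl
      exact ⟨⟨x, hxU, rfl⟩, hy⟩
end

section
/- Suppose for each neighborhood assignment φ on a topological space (X, τ) there exist a neighborhood assignment ψ on (Y, γ) and a continuous bijection f : (X, τ) → (Y, γ) such that ψ(f(x)) = f(φ(x)) for all x ∈ X. If (Y, γ) is a D-space, then (X, τ) is a D-space. -/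
/-- A topological space is a D-space. -/
def IsDSpace (X : Type*) [TopologicalSpace X] : Prop :=
  ∀ φ : X → Set X, (∀ x, IsOpen (φ x)) → (∀ x, x ∈ φ x) →
    ∃ D : Set X, IsClosed D ∧ (∀ x ∈ D, ∃ U : Set X, IsOpen U ∧ U ∩ D = {x}) ∧
      ⋃ x ∈ D, φ x = Set.univ

theorem stmt17 {X Y : Type*} [TopologicalSpace X] [TopologicalSpace Y]
    (h : ∀ φ : X → Set X, (∀ x, IsOpen (φ x)) → (∀ x, x ∈ φ x) →
      ∃ (ψ : Y → Set Y) (f : X → Y), (∀ y, IsOpen (ψ y)) ∧ (∀ y, y ∈ ψ y) ∧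
        Continuous f ∧ Function.Bijective f ∧ (∀ x, ψ (f x) = f '' φ x))
    (hY : IsDSpace Y) : IsDSpace X := by
  intro φ hopen hmem
  obtain ⟨ψ, f, hψopen, hψmem, hcont, hbij, hcomm⟩ := h φ hopen hmem
  obtain ⟨D', hD'closed, hD'disc, hD'cover⟩ := hY ψ hψopen hψmem
  refine ⟨f ⁻¹' D', hD'closed.preimage hcont, ?_, ?_⟩
  · intro x hx
    obtain ⟨U, hUopen, hU⟩ := hD'disc (f x) hx
    refine ⟨f ⁻¹' U, hUopen.preimage hcont, ?_⟩
    ext z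
    simp only [Set.mem_inter_iff, Set.mem_preimage, Set.mem_singleton_iff]
    constructor
    · rintro ⟨hzU, hzD⟩
      have : f z ∈ U ∩ D' := ⟨hzU, hzD⟩
      rw [hU] at this
      exact hbij.1 this
    · intro hz
      subst hz
      have : f z ∈ U ∩ D' := hU ▸ rfl
      exact ⟨this.1, this.2⟩
  · ext z
    simp only [Set.mem_iUnion, Set.mem_univ, iff_true]
    have : f z ∈ ⋃ y ∈ D', ψ y := hD'cover ▸ Set.mem_univ _
    simp only [Set.mem_iUnion] at this
    obtain ⟨y, hyD, hy⟩ := this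
    obtain ⟨x, rfl⟩ := hbij.2 y
    rw [hcomm] at hy
    obtain ⟨w, hw, hwz⟩ := hy
    exact ⟨x, hyD, hbij.1 hwz ▸ hw⟩
end
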